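/- For every smooth biperiodic function p : ℝ² → ℝ, the Monge–Ampère integrand of p integrates to zero over the torus: ∫_{𝕋²}(p_xx p_yy − p_xy²) = 0. -/

import Mathlib

open MeasureTheory

/-- Partial derivative in the first variable. -/
noncomputable def pdx (p : ℝ × ℝ → ℝ) (z : ℝ × ℝ) : ℝ := fderiv ℝ p z (1, 0)

/-- Partial derivative in the second variable. -/
noncomputable def pdy (p : ℝ × ℝ → ℝ) (z : ℝ × ℝ) : ℝ := fderiv ℝ p z (0, 1)

/-- A function `ℝ² → ℝ` is biperiodic if it has period 1 in each variable. -/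
def Biperiodic (p : ℝ × ℝ → ℝ) : Prop :=
  ∀ x y : ℝ, p (x + 1, y) = p (x, y) ∧ p (x, y + 1) = p (x, y)

/-- The integral over the torus `𝕋² = ℝ²/ℤ²` of (the descent of) a biperiodic function. -/
noncomputable def torusInt (f : ℝ × ℝ → ℝ) : ℝ := ∫ x in (0:ℝ)..1, ∫ y in (0:ℝ)..1, f (x, y)

/-
The Monge–Ampère integrand is a divergence: by the product rule and the symmetry of third
derivatives (`p_xxy = p_xyx`),
  `p_xx p_yy - p_xy² = ∂_y (p_y p_xx) - ∂_x (p_y p_xy)`.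
Both vector-field components are periodic, and the integral over a period of the derivative of
a periodic function vanishes by the fundamental theorem of calculus (integrating the `∂_x` term
in `x` first, after swapping the order of integration).
-/

open Function

theorem Function.Periodic.fderiv {𝕜 E F : Type*} [NontriviallyNormedField 𝕜]
    [NormedAddCommGroup E] [NormedSpace 𝕜 E] [NormedAddCommGroup F] [NormedSpace 𝕜 F]
    {f : E → F} {c : E} (h : Periodic f c) : Periodic (fderiv 𝕜 f) c := fun z => by
  rw [← fderiv_comp_add_right, show (fun w => f (w + c)) = f from funext h]

theorem biperiodic_iff {p : ℝ × ℝ → ℝ} :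
    Biperiodic p ↔ Periodic p (1, 0) ∧ Periodic p (0, 1) := by
  simp only [Biperiodic, Periodic, Prod.forall, Prod.mk_add_mk, add_zero, forall_and]

namespace Biperiodic

variable {p q : ℝ × ℝ → ℝ}

theorem pdx (h : Biperiodic p) : Biperiodic (pdx p) := by
  obtain ⟨h₁, h₂⟩ := biperiodic_iff.1 h
  exact biperiodic_iff.2 ⟨fun z => congrArg (· (1, 0)) (h₁.fderiv (𝕜 := ℝ) z),
    fun z => congrArg (· (1, 0)) (h₂.fderiv (𝕜 := ℝ) z)⟩

theorem pdy (h : Biperiodic p) : Biperiodic (pdy p) := by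
  obtain ⟨h₁, h₂⟩ := biperiodic_iff.1 h
  exact biperiodic_iff.2 ⟨fun z => congrArg (· (0, 1)) (h₁.fderiv (𝕜 := ℝ) z),
    fun z => congrArg (· (0, 1)) (h₂.fderiv (𝕜 := ℝ) z)⟩

theorem mul (hp : Biperiodic p) (hq : Biperiodic q) : Biperiodic (p * q) := by
  obtain ⟨hp₁, hp₂⟩ := biperiodic_iff.1 hp
  obtain ⟨hq₁, hq₂⟩ := biperiodic_iff.1 hq
  exact biperiodic_iff.2 ⟨hp₁.mul hq₁, hp₂.mul hq₂⟩

end Biperiodic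

section PartialDerivatives

variable {p q : ℝ × ℝ → ℝ} {x y : ℝ}

theorem ContDiff.contDiff_pdx {m n : WithTop ℕ∞} (hp : ContDiff ℝ n p) (hmn : m + 1 ≤ n) :
    ContDiff ℝ m (pdx p) :=
  (hp.fderiv_right hmn).clm_apply contDiff_const

theorem ContDiff.contDiff_pdy {m n : WithTop ℕ∞} (hp : ContDiff ℝ n p) (hmn : m + 1 ≤ n) :
    ContDiff ℝ m (pdy p) :=
  (hp.fderiv_right hmn).clm_apply contDiff_const

theorem ContDiff.continuous_pdx (hp : ContDiff ℝ 1 p) : Continuous (pdx p) :=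
  (hp.contDiff_pdx (m := 0) le_rfl).continuous

theorem ContDiff.continuous_pdy (hp : ContDiff ℝ 1 p) : Continuous (pdy p) :=
  (hp.contDiff_pdy (m := 0) le_rfl).continuous

theorem pdx_pdy_comm (hp : ContDiff ℝ 2 p) : pdx (pdy p) = pdy (pdx p) := by
  funext z
  have hd : Differentiable ℝ (fderiv ℝ p) := (hp.fderiv_right le_rfl).differentiable one_ne_zero
  have happly (v w : ℝ × ℝ) :
      fderiv ℝ (fun y => fderiv ℝ p y v) z w = fderiv ℝ (fderiv ℝ p) z w v := by
    simp [fderiv_clm_apply (hd z) (differentiableAt_const v)]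
  change fderiv ℝ (fun y => fderiv ℝ p y (0, 1)) z (1, 0)
    = fderiv ℝ (fun y => fderiv ℝ p y (1, 0)) z (0, 1)
  rw [happly, happly]
  exact hp.contDiffAt.isSymmSndFDerivAt (by simp) _ _

theorem pdx_mul (hp : Differentiable ℝ p) (hq : Differentiable ℝ q) (z : ℝ × ℝ) :
    pdx (p * q) z = pdx p z * q z + p z * pdx q z := by
  simp only [_root_.pdx, fderiv_mul (hp z) (hq z), add_apply,
    smul_apply, smul_eq_mul]
  ring

theorem pdy_mul (hp : Differentiable ℝ p) (hq : Differentiable ℝ q) (z : ℝ × ℝ) :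
    pdy (p * q) z = pdy p z * q z + p z * pdy q z := by
  simp only [_root_.pdy, fderiv_mul (hp z) (hq z), add_apply,
    smul_apply, smul_eq_mul]
  ring

theorem hasDerivAt_pdx (hp : DifferentiableAt ℝ p (x, y)) :
    HasDerivAt (fun t => p (t, y)) (pdx p (x, y)) x :=
  hp.hasFDerivAt.comp_hasDerivAt x ((hasDerivAt_id x).prodMk (hasDerivAt_const x y))

theorem hasDerivAt_pdy (hp : DifferentiableAt ℝ p (x, y)) :
    HasDerivAt (fun t => p (x, t)) (pdy p (x, y)) y :=
  hp.hasFDerivAt.comp_hasDerivAt y ((hasDerivAt_const y x).prodMk (hasDerivAt_id y))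

end PartialDerivatives

section TorusIntegral

variable {f g q : ℝ × ℝ → ℝ}

theorem integral_pdx_eq_sub (hq : ContDiff ℝ 1 q) (a b y : ℝ) :
    ∫ t in a..b, pdx q (t, y) = q (b, y) - q (a, y) :=
  intervalIntegral.integral_eq_sub_of_hasDerivAt
    (fun t _ => hasDerivAt_pdx (hq.differentiable one_ne_zero _))
    ((hq.continuous_pdx.comp (by fun_prop)).intervalIntegrable a b)

theorem integral_pdy_eq_sub (hq : ContDiff ℝ 1 q) (a b x : ℝ) :
    ∫ t in a..b, pdy q (x, t) = q (x, b) - q (x, a) :=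
  intervalIntegral.integral_eq_sub_of_hasDerivAt
    (fun t _ => hasDerivAt_pdy (hq.differentiable one_ne_zero _))
    ((hq.continuous_pdy.comp (by fun_prop)).intervalIntegrable a b)

theorem torusInt_sub (hf : Continuous f) (hg : Continuous g) :
    torusInt (f - g) = torusInt f - torusInt g := by
  have inner (h : ℝ × ℝ → ℝ) (hh : Continuous h) (x : ℝ) :
      IntervalIntegrable (fun y => h (x, y)) volume 0 1 :=
    (hh.comp (by fun_prop)).intervalIntegrable 0 1
  have outer (h : ℝ × ℝ → ℝ) (hh : Continuous h) :
      IntervalIntegrable (fun x => ∫ y in (0:ℝ)..1, h (x, y)) volume 0 1 :=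
    (intervalIntegral.continuous_parametric_intervalIntegral_of_continuous'
      (f := fun x y => h (x, y)) (hh.comp (by fun_prop)) 0 1).intervalIntegrable 0 1
  rw [torusInt, torusInt, torusInt, ← intervalIntegral.integral_sub (outer f hf) (outer g hg)]
  exact intervalIntegral.integral_congr fun x _ =>
    intervalIntegral.integral_sub (inner f hf x) (inner g hg x)

theorem torusInt_eq_integral_swap (hf : Continuous f) :
    torusInt f = ∫ y in (0:ℝ)..1, ∫ x in (0:ℝ)..1, f (x, y) := by
  simp only [torusInt, intervalIntegral.integral_of_le zero_le_one]
  refine integral_integral_swap ?_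
  rw [Measure.prod_restrict]
  exact (hf.continuousOn.integrableOn_compact (isCompact_Icc.prod isCompact_Icc)).mono_set
    (Set.prod_mono Set.Ioc_subset_Icc_self Set.Ioc_subset_Icc_self)

theorem torusInt_pdx_eq_zero (hq : ContDiff ℝ 1 q) (h : Biperiodic q) :
    torusInt (pdx q) = 0 := by
  have hx (y : ℝ) : q (1, y) = q (0, y) := by simpa using (h 0 y).1
  simp [torusInt_eq_integral_swap hq.continuous_pdx, integral_pdx_eq_sub hq, hx]

theorem torusInt_pdy_eq_zero (hq : ContDiff ℝ 1 q) (h : Biperiodic q) :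
    torusInt (pdy q) = 0 := by
  have hy (x : ℝ) : q (x, 1) = q (x, 0) := by simpa using (h x 0).2
  simp [torusInt, integral_pdy_eq_sub hq, hy]

end TorusIntegral

noncomputable def mongeAmpere (p : ℝ × ℝ → ℝ) : ℝ × ℝ → ℝ :=
  pdx (pdx p) * pdy (pdy p) - pdy (pdx p) ^ 2

theorem mongeAmpere_eq_pdy_sub_pdx {p : ℝ × ℝ → ℝ} (hp : ContDiff ℝ 3 p) :
    mongeAmpere p = pdy (pdy p * pdx (pdx p)) - pdx (pdy p * pdy (pdx p)) := by
  have hpx : ContDiff ℝ 2 (pdx p) := hp.contDiff_pdx le_rfl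
  have hpy : Differentiable ℝ (pdy p) := (hp.contDiff_pdy le_rfl).differentiable two_ne_zero
  have hpxx : Differentiable ℝ (pdx (pdx p)) :=
    (hpx.contDiff_pdx le_rfl).differentiable one_ne_zero
  have hpxy : Differentiable ℝ (pdy (pdx p)) :=
    (hpx.contDiff_pdy le_rfl).differentiable one_ne_zero
  funext z
  simp only [mongeAmpere, Pi.sub_apply, Pi.mul_apply, Pi.pow_apply, pdy_mul hpy hpxx,
    pdx_mul hpy hpxy, pdx_pdy_comm (hp.of_le (by norm_num)), pdx_pdy_comm hpx]
  ring

theorem torusInt_mongeAmpere_eq_zero {p : ℝ × ℝ → ℝ} (hp : ContDiff ℝ 3 p) (h : Biperiodic p) :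
    torusInt (mongeAmpere p) = 0 := by
  have hpx : ContDiff ℝ 2 (pdx p) := hp.contDiff_pdx le_rfl
  have hpy : ContDiff ℝ 1 (pdy p) := hp.contDiff_pdy (by norm_num)
  have hA : ContDiff ℝ 1 (pdy p * pdx (pdx p)) := hpy.mul (hpx.contDiff_pdx le_rfl)
  have hB : ContDiff ℝ 1 (pdy p * pdy (pdx p)) := hpy.mul (hpx.contDiff_pdy le_rfl)
  rw [mongeAmpere_eq_pdy_sub_pdx hp, torusInt_sub hA.continuous_pdy hB.continuous_pdx,
    torusInt_pdy_eq_zero hA (h.pdy.mul h.pdx.pdx),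
    torusInt_pdx_eq_zero hB (h.pdy.mul h.pdx.pdy), sub_zero]

/-- The Monge–Ampère integrand of a smooth biperiodic function integrates to zero over
the 2-torus. -/
theorem monge_ampere_integrand_integrates_to_zero (p : ℝ × ℝ → ℝ)
    (hp : ContDiff ℝ (⊤ : ℕ∞) p) (hper : Biperiodic p) :
    torusInt (fun z => pdx (pdx p) z * pdy (pdy p) z - (pdy (pdx p) z) ^ 2) = 0 := by
  exact torusInt_mongeAmpere_eq_zero (hp.of_le (by norm_cast)) hper
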